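/- (Theorem 1, linear-algebraic core.) Let W be a symmetric 2d × 2d real matrix, c_0 ≥ 0, and 𝛍_t a unit vector with W𝛍_t = c_0 𝛍_t. Assume ‖W v‖ ≤ c_0 ‖v‖ for all v ∈ ℝ^{2d}. Then for every unit vector 𝛍 with 𝛍_tᵀ𝛍 > 0 and all scalars α ≥ 0, β ≥ 0 with α𝛍 + βW𝛍 ≠ 0, the updated mean 𝛍' = (α𝛍 + βW𝛍)/‖α𝛍 + βW𝛍‖ satisfies 𝛍_tᵀ𝛍' ≥ 𝛍_tᵀ𝛍; that is, the overlap of the new mean vector with the true vector is at least that of the current mean vector. -/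

import Mathlib

/-!
Symmetry of `W` and `W μt = c0 μt` give `⟪μt, αμ + βWμ⟫ = (α + β c0) ⟪μt, μ⟫`, while the
triangle inequality and the bound `‖Wμ‖ ≤ c0` give `‖αμ + βWμ‖ ≤ α + β c0`. Dividing by the
norm therefore cannot decrease a nonnegative overlap.
-/

open Matrix

section InnerProductSpace

open scoped RealInnerProductSpace

variable {E : Type*} [NormedAddCommGroup E] [InnerProductSpace ℝ E] {T : E →ₗ[ℝ] E}
  {u x : E} {c α β : ℝ}

theorem LinearMap.IsSymmetric.inner_smul_add_smul_apply_of_eigenvector (hT : T.IsSymmetric)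
    (hu : T u = c • u) :
    ⟪u, α • x + β • T x⟫ = (α + β * c) * ⟪u, x⟫ := by
  rw [inner_add_right, inner_smul_right, inner_smul_right, ← hT, hu, real_inner_smul_left]
  ring

theorem LinearMap.norm_smul_add_smul_apply_le (hTx : ‖T x‖ ≤ c * ‖x‖) (hα : 0 ≤ α)
    (hβ : 0 ≤ β) :
    ‖α • x + β • T x‖ ≤ (α + β * c) * ‖x‖ :=
  calc ‖α • x + β • T x‖ ≤ α * ‖x‖ + β * ‖T x‖ := by
        simpa only [norm_smul, Real.norm_of_nonneg hα, Real.norm_of_nonneg hβ]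
          using norm_add_le (α • x) (β • T x)
    _ ≤ α * ‖x‖ + β * (c * ‖x‖) := by gcongr
    _ = (α + β * c) * ‖x‖ := by ring

theorem LinearMap.IsSymmetric.inner_le_inner_normalize_smul_add_smul (hT : T.IsSymmetric)
    (hu : T u = c • u) (hTx : ‖T x‖ ≤ c * ‖x‖) (hx : ‖x‖ = 1) (hux : 0 ≤ ⟪u, x⟫)
    (hα : 0 ≤ α) (hβ : 0 ≤ β) (hv : α • x + β • T x ≠ 0) :
    ⟪u, x⟫ ≤ ⟪u, ‖α • x + β • T x‖⁻¹ • (α • x + β • T x)⟫ := by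
  have hnorm : ‖α • x + β • T x‖ ≤ α + β * c := by
    simpa only [hx, mul_one] using LinearMap.norm_smul_add_smul_apply_le hTx hα hβ
  rw [real_inner_smul_right, hT.inner_smul_add_smul_apply_of_eigenvector hu, ← div_eq_inv_mul,
    le_div_iff₀ (norm_pos_iff.mpr hv), mul_comm]
  exact mul_le_mul_of_nonneg_right hnorm hux

end InnerProductSpace

theorem EuclideanSpace.sqrt_sum_sq_eq_norm_toLp {ι : Type*} [Fintype ι] (w : ι → ℝ) :
    Real.sqrt (∑ i, w i ^ 2) = ‖WithLp.toLp 2 w‖ := by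
  simp [EuclideanSpace.norm_eq]

theorem dotProduct_eq_inner_toLp {ι : Type*} [Fintype ι] (a b : ι → ℝ) :
    a ⬝ᵥ b = inner ℝ (WithLp.toLp 2 a) (WithLp.toLp 2 b) := by
  rw [EuclideanSpace.inner_toLp_toLp, star_trivial, dotProduct_comm]

theorem stmt8_general {d : ℕ} (W : Matrix (Fin (2 * d)) (Fin (2 * d)) ℝ) (hW : W.IsSymm)
    (c0 : ℝ)
    (μt : Fin (2 * d) → ℝ) (hEig : W *ᵥ μt = c0 • μt)
    (hbound : ∀ v : Fin (2 * d) → ℝ,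
      Real.sqrt (∑ i, (W *ᵥ v) i ^ 2) ≤ c0 * Real.sqrt (∑ i, v i ^ 2))
    (μ : Fin (2 * d) → ℝ) (hμ : ∑ i, μ i ^ 2 = 1) (hov : 0 < μt ⬝ᵥ μ)
    (α β : ℝ) (hα : 0 ≤ α) (hβ : 0 ≤ β)
    (hne : α • μ + β • (W *ᵥ μ) ≠ 0) :
    μt ⬝ᵥ (Real.sqrt (∑ i, (α • μ + β • (W *ᵥ μ)) i ^ 2))⁻¹ • (α • μ + β • (W *ᵥ μ))
      ≥ μt ⬝ᵥ μ := by
  set T := W.toEuclideanLin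
  have hT : T.IsSymmetric := isSymmetric_toEuclideanLin_iff.mpr (isHermitian_iff_isSymm.mpr hW)
  have hTv (v : Fin (2 * d) → ℝ) : T (WithLp.toLp 2 v) = WithLp.toLp 2 (W *ᵥ v) := rfl
  have hupdate : WithLp.toLp 2 (α • μ + β • (W *ᵥ μ))
      = α • WithLp.toLp 2 μ + β • T (WithLp.toLp 2 μ) := by
    rw [hTv, WithLp.toLp_add, WithLp.toLp_smul, WithLp.toLp_smul]
  have hx : ‖WithLp.toLp 2 μ‖ = 1 := by
    rw [← EuclideanSpace.sqrt_sum_sq_eq_norm_toLp, hμ, Real.sqrt_one]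
  have key := hT.inner_le_inner_normalize_smul_add_smul (u := WithLp.toLp 2 μt)
    (by rw [hTv, hEig, WithLp.toLp_smul])
    (by simpa only [EuclideanSpace.sqrt_sum_sq_eq_norm_toLp, hTv] using hbound μ) hx
    (by rw [← dotProduct_eq_inner_toLp]; exact hov.le) hα hβ
    (by rwa [← hupdate, Ne, WithLp.toLp_eq_zero])
  rwa [ge_iff_le, dotProduct_eq_inner_toLp, dotProduct_eq_inner_toLp, WithLp.toLp_smul,
    EuclideanSpace.sqrt_sum_sq_eq_norm_toLp, hupdate]

/-- Theorem 1, linear-algebraic core: Let W be a symmetric 2d × 2d real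
matrix, c_0 ≥ 0, 𝛍_t a unit vector with W𝛍_t = c_0 𝛍_t, and ‖Wv‖ ≤ c_0‖v‖ for all v
(Euclidean norms). Then for every unit vector 𝛍 with 𝛍_tᵀ𝛍 > 0 and all α, β ≥ 0 with
α𝛍 + βW𝛍 ≠ 0, the updated mean 𝛍' = (α𝛍 + βW𝛍)/‖α𝛍 + βW𝛍‖ satisfies 𝛍_tᵀ𝛍' ≥ 𝛍_tᵀ𝛍. -/
theorem stmt8 {d : ℕ} (W : Matrix (Fin (2 * d)) (Fin (2 * d)) ℝ) (hW : W.IsSymm)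
    (c0 : ℝ) (hc0 : 0 ≤ c0)
    (μt : Fin (2 * d) → ℝ) (hμt : ∑ i, μt i ^ 2 = 1) (hEig : W *ᵥ μt = c0 • μt)
    (hbound : ∀ v : Fin (2 * d) → ℝ,
      Real.sqrt (∑ i, (W *ᵥ v) i ^ 2) ≤ c0 * Real.sqrt (∑ i, v i ^ 2))
    (μ : Fin (2 * d) → ℝ) (hμ : ∑ i, μ i ^ 2 = 1) (hov : 0 < μt ⬝ᵥ μ)
    (α β : ℝ) (hα : 0 ≤ α) (hβ : 0 ≤ β)
    (hne : α • μ + β • (W *ᵥ μ) ≠ 0) :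
    μt ⬝ᵥ (Real.sqrt (∑ i, (α • μ + β • (W *ᵥ μ)) i ^ 2))⁻¹ • (α • μ + β • (W *ᵥ μ))
      ≥ μt ⬝ᵥ μ :=
  stmt8_general W hW c0 μt hEig hbound μ hμ hov α β hα hβ hne
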